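/- For any simple elementary language p ∈ 𝒮ℰ(Σ) and any letter a ∈ Σ, both the discrete successor Suc_a(p) and the continuous successor Suc_t(p) are simple elementary languages. -/

import Mathlib

/-!
A timed condition is equivalent to a simple canonical one as soon as, over all its solutions,
every sum `T_{i,j}` stays in a single region `{d}` or `(d, d + 1)`: the canonical condition is
read off from any one solution, and an unsatisfiable condition is replaced by one containing
`T_{i,j} < 0` for every pair. Simple conditions have this property. The condition `Λᵗ` of the
continuous successor is again simple, because it only replaces a pair of atoms on some `T_{i,n}`
by a pair of the other shape (`T = d` by `d < T < d + 1`, or `d < T < d + 1` by `T = d + 1`).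
For `Λ ∧ τ_{n+1} = 0` the new sums `T_{i,n+1}` coincide with `T_{i,n}`.
-/

open scoped NNReal

namespace TimedLang

/-- Comparison relations appearing in timed conditions. -/
inductive Rel where
  | lt
  | le
  | ge
  | gt
deriving DecidableEq

/-- Semantics of a comparison `x ⋈ d` (with `d ∈ ℕ`). -/
def Rel.holds : Rel → ℝ≥0 → ℕ → Prop
  | .lt, x, d => x < (d : ℝ≥0)
  | .le, x, d => x ≤ (d : ℝ≥0)
  | .ge, x, d => (d : ℝ≥0) ≤ x
  | .gt, x, d => (d : ℝ≥0) < x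

/-- `sumT v i j` is the sum `T_{i,j} = τ_i + τ_{i+1} + ⋯ + τ_j` of the entries of `v`. -/
def sumT (v : List ℝ≥0) (i j : ℕ) : ℝ≥0 :=
  ((v.drop i).take (j + 1 - i)).sum

/-- An atomic constraint `T_{i,j} ⋈ d`. -/
structure TCAtom where
  i : ℕ
  j : ℕ
  rel : Rel
  d : ℕ
deriving DecidableEq

/-- A timed condition: a finite conjunction of atomic constraints over variables τ₀, …, τₙ. -/
structure TCond where
  n : ℕ
  atoms : Finset TCAtom

/-- Well-formedness: every atom constrains a sum `T_{i,j}` with `i ≤ j ≤ n`. -/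
def TCond.WF (c : TCond) : Prop := ∀ a ∈ c.atoms, a.i ≤ a.j ∧ a.j ≤ c.n

/-- A valuation (a list of n+1 nonnegative reals) satisfies a timed condition. -/
def TCond.Sat (c : TCond) (v : List ℝ≥0) : Prop :=
  v.length = c.n + 1 ∧ ∀ a ∈ c.atoms, a.rel.holds (sumT v a.i a.j) a.d

/-- The set of satisfying valuations is bounded. -/
def TCond.Bounded (c : TCond) : Prop := ∃ M : ℝ≥0, ∀ v, c.Sat v → v.sum ≤ M

/-- A timed condition is simple if for each `T_{i,j}` it contains
`d < T_{i,j} < d+1` or `T_{i,j} = d` for some natural number `d`. -/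
def TCond.Simple (c : TCond) : Prop :=
  ∀ i j : ℕ, i ≤ j → j ≤ c.n → ∃ d : ℕ,
    ((⟨i, j, Rel.gt, d⟩ : TCAtom) ∈ c.atoms ∧ (⟨i, j, Rel.lt, d + 1⟩ : TCAtom) ∈ c.atoms) ∨
    ((⟨i, j, Rel.ge, d⟩ : TCAtom) ∈ c.atoms ∧ (⟨i, j, Rel.le, d⟩ : TCAtom) ∈ c.atoms)

/-- A timed condition is canonical if no inequality `T_{i,j} ⋈ d` can be strengthened or
added without changing its semantics: every semantically implied atomic constraint is
subsumed by an explicit atom on the same pair of indices. -/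
def TCond.Canonical (c : TCond) : Prop :=
  ∀ a : TCAtom, a.i ≤ a.j → a.j ≤ c.n →
    (∀ v, c.Sat v → a.rel.holds (sumT v a.i a.j) a.d) →
    ∃ b ∈ c.atoms, b.i = a.i ∧ b.j = a.j ∧ ∀ x : ℝ≥0, b.rel.holds x b.d → a.rel.holds x a.d

/-- A timed word: an alternating sequence `τ₀ a₁ τ₁ a₂ … aₙ τₙ`,
encoded as the word `a₁ … aₙ` together with the list of delays `τ₀, …, τₙ`. -/
structure TimedWord (A : Type) where
  word : List A
  delays : List ℝ≥0

/-- Well-formedness of a timed word: there are `n+1` delays for `n` letters.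
`𝒯(Σ)` is the set of well-formed timed words. -/
def TimedWord.WF {A : Type} (w : TimedWord A) : Prop :=
  w.delays.length = w.word.length + 1

/-- Concatenation of timed words: the last delay of `w` is merged with the first
delay of `w'`. -/
def TimedWord.concat {A : Type} (w w' : TimedWord A) : TimedWord A :=
  ⟨w.word ++ w'.word,
    w.delays.dropLast ++ (w.delays.getLastD 0 + w'.delays.headD 0) :: w'.delays.tail⟩

/-- `w` is a prefix of `w'` (with respect to concatenation of timed words). -/
def TimedWord.IsPrefix {A : Type} (w w' : TimedWord A) : Prop :=
  ∃ w'' : TimedWord A, w''.WF ∧ w.concat w'' = w'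

/-- An elementary language `(u, Λ)`. -/
structure ElemLang (A : Type) where
  word : List A
  cond : TCond

/-- The set of timed words belonging to the elementary language. -/
def ElemLang.toSet {A : Type} (p : ElemLang A) : Set (TimedWord A) :=
  {w | w.word = p.word ∧ p.cond.Sat w.delays}

/-- Well-formedness of an elementary language: the timed condition is over
`τ₀, …, τ_{|u|}` and its set of satisfying valuations is bounded. -/
def ElemLang.WF {A : Type} (p : ElemLang A) : Prop :=
  p.cond.n = p.word.length ∧ p.cond.WF ∧ p.cond.Bounded

/-- An elementary language is simple if it equals `(u, Λ')` for some simple and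
canonical timed condition `Λ'`. -/
def ElemLang.IsSimple {A : Type} (p : ElemLang A) : Prop :=
  ∃ c' : TCond, c'.n = p.cond.n ∧ c'.WF ∧ c'.Simple ∧ c'.Canonical ∧
    ∀ v, p.cond.Sat v ↔ c'.Sat v

/-- `ℰ(Σ)`: the set of (well-formed) elementary languages over the alphabet `A`. -/
def allElem (A : Type) : Set (ElemLang A) := {p | p.WF}

/-- `𝒮ℰ(Σ)`: the set of simple elementary languages over the alphabet `A`. -/
def simpleElem (A : Type) : Set (ElemLang A) := {p | p.WF ∧ p.IsSimple}

/-- `p` is a prefix of `p'` (as elementary languages). -/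
def ElemLang.IsPrefixOf {A : Type} (p p' : ElemLang A) : Prop :=
  (∀ w' ∈ p'.toSet, ∃ w ∈ p.toSet, w.IsPrefix w') ∧
  (∀ w ∈ p.toSet, ∃ w' ∈ p'.toSet, w.IsPrefix w')

/-- Symbolic membership `Sym_L(p⋅s)` of the concatenation `p⋅s` in `L`, as the strongest
constraint over the two blocks of variables (those of `p` and those of `s`): the set of
pairs of valuations of timed words `w ∈ p`, `w'' ∈ s` with `w⋅w'' ∈ L`. -/
def SymPair {A : Type} (L : Set (TimedWord A)) (p s : ElemLang A) :
    Set (List ℝ≥0 × List ℝ≥0) :=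
  {vv | ∃ w w'' : TimedWord A, w ∈ p.toSet ∧ w'' ∈ s.toSet ∧
    w.delays = vv.1 ∧ w''.delays = vv.2 ∧ w.concat w'' ∈ L}

/-- A renaming equation over variable blocks `𝕋 = {τ₀,…,τₙ}` and `𝕋' = {τ'₀,…,τ'ₙ'}`:
a finite conjunction of equations `T_{i,n} = T'_{i',n'}`, given by the set of pairs
`(i, i')`. -/
structure RenamingEq where
  n : ℕ
  n' : ℕ
  pairs : Finset (ℕ × ℕ)

def RenamingEq.WF (R : RenamingEq) : Prop := ∀ q ∈ R.pairs, q.1 ≤ R.n ∧ q.2 ≤ R.n'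

/-- A pair of valuations satisfies a renaming equation. -/
def RenamingEq.Sat (R : RenamingEq) (v v' : List ℝ≥0) : Prop :=
  ∀ q ∈ R.pairs, sumT v q.1 R.n = sumT v' q.2 R.n'

/-- The same renaming equation, read in the other direction. -/
def RenamingEq.symm (R : RenamingEq) : RenamingEq :=
  ⟨R.n', R.n, R.pairs.image Prod.swap⟩

/-- `Rename(φ, R)`: the constraint obtained from `φ` by replacing each sum `T_{i,n}`
by `T'_{i',n'}` according to the equations of `R` (semantic counterpart:
image of `φ` under the renaming relation). -/
def RenameC (R : RenamingEq) (φ : Set (List ℝ≥0 × List ℝ≥0)) :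
    Set (List ℝ≥0 × List ℝ≥0) :=
  {vv | ∃ v : List ℝ≥0, R.Sat v vv.1 ∧ (v, vv.2) ∈ φ}

/-- `p ⊑^{s,R}_L p'`. -/
def Sqsub {A : Type} (L : Set (TimedWord A)) (s : ElemLang A) (R : RenamingEq)
    (p p' : ElemLang A) : Prop :=
  (∀ w ∈ p.toSet, ∃ w' ∈ p'.toSet, R.Sat w.delays w'.delays) ∧
  (∀ vv : List ℝ≥0 × List ℝ≥0,
    (vv ∈ RenameC R (SymPair L p s) ∧ p'.cond.Sat vv.1) ↔
    (vv ∈ SymPair L p' s ∧ ∃ v : List ℝ≥0, R.Sat v vv.1 ∧ p.cond.Sat v))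

/-- `p ~^{s,R}_L p'`. -/
def EquivOne {A : Type} (L : Set (TimedWord A)) (s : ElemLang A) (R : RenamingEq)
    (p p' : ElemLang A) : Prop :=
  Sqsub L s R p p' ∧ Sqsub L s R.symm p' p

/-- `p ~^{S,R}_L p'`. -/
def EquivSR {A : Type} (L : Set (TimedWord A)) (S : Set (ElemLang A)) (R : RenamingEq)
    (p p' : ElemLang A) : Prop :=
  ∀ s ∈ S, EquivOne L s R p p'

/-- `p ~^S_L p'`. -/
def EquivS {A : Type} (L : Set (TimedWord A)) (S : Set (ElemLang A))
    (p p' : ElemLang A) : Prop :=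
  ∃ R : RenamingEq, R.WF ∧ R.n = p.word.length ∧ R.n' = p'.word.length ∧
    EquivSR L S R p p'

/-- `Λ ∧ τ_{n+1} = 0`: the timed condition of a discrete immediate exterior/successor. -/
def TCond.extendZero (c : TCond) : TCond :=
  ⟨c.n + 1, c.atoms ∪
    ({⟨c.n + 1, c.n + 1, Rel.le, 0⟩, ⟨c.n + 1, c.n + 1, Rel.ge, 0⟩} : Finset TCAtom)⟩

/-- The atoms of `c` that are part of an equation `T_{i,n} = d` on a suffix sum. -/
def TCond.suffixEqAtoms (c : TCond) : Finset TCAtom :=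
  c.atoms.filter (fun a => a.j = c.n ∧
    ((a.rel = Rel.ge ∧ (⟨a.i, a.j, Rel.le, a.d⟩ : TCAtom) ∈ c.atoms) ∨
     (a.rel = Rel.le ∧ (⟨a.i, a.j, Rel.ge, a.d⟩ : TCAtom) ∈ c.atoms)))

/-- The atoms of `c` of the form `T_{i,n} < d`. -/
def TCond.suffixLtAtoms (c : TCond) : Finset TCAtom :=
  c.atoms.filter (fun a => a.j = c.n ∧ a.rel = Rel.lt)

/-- `Λᵗ` for the continuous immediate exterior: every equation `T_{i,n} = d` is replaced
by `T_{i,n} > d` if such an equation exists; otherwise the inequality `T_{i,n} < d` with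
the smallest index `i` is replaced by `T_{i,n} = d`. -/
def TCond.extTCond (c : TCond) : TCond :=
  if c.suffixEqAtoms.Nonempty then
    ⟨c.n, (c.atoms \ c.suffixEqAtoms) ∪
      c.suffixEqAtoms.image (fun a => (⟨a.i, a.j, Rel.gt, a.d⟩ : TCAtom))⟩
  else if h : c.suffixLtAtoms.Nonempty then
    let i0 := (c.suffixLtAtoms.image TCAtom.i).min' (h.image TCAtom.i)
    let repl := c.suffixLtAtoms.filter (fun a => a.i = i0)
    ⟨c.n, ((c.atoms \ repl) ∪
      repl.image (fun a => (⟨a.i, a.j, Rel.ge, a.d⟩ : TCAtom))) ∪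
      repl.image (fun a => (⟨a.i, a.j, Rel.le, a.d⟩ : TCAtom))⟩
  else c

/-- `i` indexes a suffix sum `T_{i,n}` whose fractional part is greatest
(w.r.t. the order `≺` determined by the condition). -/
def TCond.MaxFracIdx (c : TCond) (i : ℕ) : Prop :=
  i ≤ c.n ∧ ∀ v, c.Sat v → ∀ k, k ≤ c.n →
    Int.fract ((sumT v k c.n : ℝ≥0) : ℝ) ≤ Int.fract ((sumT v i c.n : ℝ≥0) : ℝ)

open Classical in
/-- The strict atoms `d < T_{i,n} < d+1` on suffix sums with `≺`-greatest fractional part. -/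
noncomputable def TCond.maxFracAtoms (c : TCond) : Finset TCAtom :=
  c.atoms.filter (fun a => a.j = c.n ∧ (a.rel = Rel.gt ∨ a.rel = Rel.lt) ∧ c.MaxFracIdx a.i)

/-- `Λᵗ` for the continuous successor: if `Λ` contains an equation `T_{i,n} = d`, all such
equations are replaced by `d < T_{i,n} < d+1`; otherwise, for each `T_{i,n}` greatest in
terms of the fractional-part order, `d < T_{i,n} < d+1` is replaced by `T_{i,n} = d+1`. -/
noncomputable def TCond.sucTCond (c : TCond) : TCond :=
  if c.suffixEqAtoms.Nonempty then
    ⟨c.n, (c.atoms \ c.suffixEqAtoms) ∪ c.suffixEqAtoms.image (fun a =>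
      if a.rel = Rel.ge then (⟨a.i, a.j, Rel.gt, a.d⟩ : TCAtom)
      else (⟨a.i, a.j, Rel.lt, a.d + 1⟩ : TCAtom))⟩
  else
    ⟨c.n, (c.atoms \ c.maxFracAtoms) ∪ c.maxFracAtoms.image (fun a =>
      if a.rel = Rel.gt then (⟨a.i, a.j, Rel.ge, a.d + 1⟩ : TCAtom)
      else (⟨a.i, a.j, Rel.le, a.d⟩ : TCAtom))⟩

/-- The discrete immediate exterior `ext_a(p) = (u⋅a, Λ ∧ τ_{n+1} = 0)`. -/
def extA {A : Type} (p : ElemLang A) (a : A) : ElemLang A :=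
  ⟨p.word ++ [a], p.cond.extendZero⟩

/-- The continuous immediate exterior `ext_t(p) = (u, Λᵗ)`. -/
def extT {A : Type} (p : ElemLang A) : ElemLang A :=
  ⟨p.word, p.cond.extTCond⟩

/-- The immediate exterior `ext(p) = ⋃_{a∈Σ} ext_a(p) ∪ ext_t(p)` (as a timed language). -/
def extSet {A : Type} (p : ElemLang A) : Set (TimedWord A) :=
  (⋃ a : A, (extA p a).toSet) ∪ (extT p).toSet

/-- The exterior of a set of elementary languages (as a timed language). -/
def extOf {A : Type} (P : Set (ElemLang A)) : Set (TimedWord A) :=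
  ⋃ p ∈ P, extSet p

/-- The union of a set of elementary languages, as a timed language. -/
def unionOf {A : Type} (P : Set (ElemLang A)) : Set (TimedWord A) :=
  ⋃ p ∈ P, p.toSet

/-- The discrete successor `Suc_a(p) = (u⋅a, Λ ∧ τ_{n+1} = 0)`. -/
def SucA {A : Type} (p : ElemLang A) (a : A) : ElemLang A :=
  ⟨p.word ++ [a], p.cond.extendZero⟩

/-- The continuous successor `Suc_t(p) = (u, Λᵗ)`. -/
noncomputable def SucT {A : Type} (p : ElemLang A) : ElemLang A :=
  ⟨p.word, p.cond.sucTCond⟩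

/-- `Suc(P) = ⋃_{p∈P} Suc(p)`, as a set of elementary languages. -/
def SucSet {A : Type} (P : Set (ElemLang A)) : Set (ElemLang A) :=
  {q | ∃ p ∈ P, (∃ a : A, q = SucA p a) ∨ q = SucT p}

/-- A timed language is chronometric if it is a finite union of pairwise disjoint
elementary languages. -/
def Chronometric {A : Type} (L : Set (TimedWord A)) : Prop :=
  ∃ Ps : Set (ElemLang A), Ps.Finite ∧ (∀ p ∈ Ps, p.WF) ∧
    (Ps.Pairwise fun p q => Disjoint p.toSet q.toSet) ∧ L = unionOf Ps

/-- A set of elementary languages is prefix-closed if it contains (up to language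
equality) all prefixes of its members. -/
def PrefixClosedSet {A : Type} (P : Set (ElemLang A)) : Prop :=
  ∀ p' ∈ P, ∀ p : ElemLang A, p.WF → p.IsPrefixOf p' → ∃ q ∈ P, q.toSet = p.toSet

/-- A tuple `(p, p', R)` defining a chronometric relational morphism. -/
structure MorphTuple (A : Type) where
  src : ElemLang A
  tgt : ElemLang A
  ren : RenamingEq

/-- Well-formedness of a morphism tuple with respect to `P`. -/
def MorphTuple.WF {A : Type} (t : MorphTuple A) (P : Set (ElemLang A)) : Prop :=
  t.src.WF ∧ t.tgt.WF ∧ t.src.toSet ⊆ extOf P ∧ t.tgt.toSet ⊆ unionOf P ∧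
  t.ren.WF ∧ t.ren.n = t.src.word.length ∧ t.ren.n' = t.tgt.word.length

/-- Well-formedness of a finite set `Φ` of tuples defining a chronometric relational
morphism: the sources are pairwise disjoint and their union is `ext(P) ∖ P`. -/
def PhiWF {A : Type} (P : Set (ElemLang A)) (Φ : Set (MorphTuple A)) : Prop :=
  Φ.Finite ∧ (∀ t ∈ Φ, t.WF P) ∧
  (Φ.Pairwise fun t t' => Disjoint t.src.toSet t'.src.toSet) ∧
  (⋃ t ∈ Φ, t.src.toSet) = extOf P \ unionOf P

/-- The chronometric relational morphism `〚Φ〛 ⊆ 𝒯(Σ) × P`, defined inductively. -/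
inductive MorphRel {A : Type} (P : Set (ElemLang A)) (Φ : Set (MorphTuple A)) :
    TimedWord A → TimedWord A → Prop where
  | refl (w : TimedWord A) (hw : w ∈ unionOf P) : MorphRel P Φ w w
  | base (t : MorphTuple A) (ht : t ∈ Φ) (w w' : TimedWord A)
      (hw : w ∈ t.src.toSet) (hw' : w' ∈ t.tgt.toSet)
      (hR : t.ren.Sat w.delays w'.delays) : MorphRel P Φ w w'
  | trans (w wmid wfin wext : TimedWord A) (hw : w ∈ extOf P) (hext : wext.WF)
      (h1 : MorphRel P Φ w wmid)
      (h2 : MorphRel P Φ (wmid.concat wext) wfin) :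
      MorphRel P Φ (w.concat wext) wfin

/-- A timed language is recognizable. -/
def Recognizable {A : Type} (L : Set (TimedWord A)) : Prop :=
  ∃ (P : Set (ElemLang A)) (F : Set (TimedWord A)) (Φ : Set (MorphTuple A)),
    P.Finite ∧ (∀ p ∈ P, p.WF) ∧
    (P.Pairwise fun p q => Disjoint p.toSet q.toSet) ∧
    PrefixClosedSet P ∧
    Chronometric F ∧ F ⊆ unionOf P ∧
    PhiWF P Φ ∧
    (∀ t ∈ Φ, t.tgt.toSet ⊆ F ∨ t.tgt.toSet ∩ F = ∅) ∧
    L = {w | ∃ w' ∈ F, MorphRel P Φ w w'}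

/-- A timed observation table `(P, S, T)`. -/
structure ObsTable (A : Type) where
  P : Set (ElemLang A)
  S : Set (ElemLang A)
  T : ElemLang A → ElemLang A → Set (List ℝ≥0 × List ℝ≥0)

/-- The row indices `P ∪ Suc(P)` of a timed observation table. -/
def ObsTable.rows {A : Type} (O : ObsTable A) : Set (ElemLang A) :=
  O.P ∪ SucSet O.P

/-- Well-formedness of a timed observation table for the target language `L`:
`P` is a prefix-closed finite set of simple elementary languages, `S` is a finite set of
elementary languages, and `T` maps `(p, s) ∈ (P ∪ Suc(P)) × S` to `Sym_L(p⋅s)`. -/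
def ObsTable.WF {A : Type} (O : ObsTable A) (L : Set (TimedWord A)) : Prop :=
  O.P.Finite ∧ (∀ p ∈ O.P, p.WF ∧ p.cond.Simple ∧ p.cond.Canonical) ∧
  (∀ p' ∈ O.P, ∀ p : ElemLang A, p.WF → p.IsPrefixOf p' → ∃ q ∈ O.P, q.toSet = p.toSet) ∧
  O.S.Finite ∧ (∀ s ∈ O.S, s.WF) ∧
  (∀ p ∈ O.rows, ∀ s ∈ O.S, O.T p s = SymPair L p s)

/-- The timed observation table is closed. -/
def ObsTable.Closed {A : Type} (O : ObsTable A) (L : Set (TimedWord A)) : Prop :=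
  ∀ p ∈ SucSet O.P, p ∉ O.P → ∃ p' ∈ O.P, EquivS L O.S p p'

/-- The timed observation table is consistent. -/
def ObsTable.Consistent {A : Type} (O : ObsTable A) (L : Set (TimedWord A)) : Prop :=
  ∀ p ∈ O.P, ∀ p' ∈ O.P, ∀ a : A,
    EquivS L O.S p p' → EquivS L O.S (SucA p a) (SucA p' a)

/-- The timed observation table is exterior-consistent. -/
def ObsTable.ExtConsistent {A : Type} (O : ObsTable A) : Prop :=
  ∀ p ∈ O.P, SucT p ∉ O.P → (SucT p).toSet ⊆ (extT p).toSet

/-- The timed observation table is cohesive. -/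
def ObsTable.Cohesive {A : Type} (O : ObsTable A) (L : Set (TimedWord A)) : Prop :=
  O.Closed L ∧ O.Consistent L ∧ O.ExtConsistent

/-- `Φ` contains, for each `p ∈ P` with `Suc_t(p) ∉ P`, a tuple `(ext_t(p), p', R)` with
`p' ∈ P` and `Suc_t(p) ~^{S,R}_L p'`, and for each `p ∈ P`, `a ∈ Σ` with `Suc_a(p) ∉ P`,
a tuple `(ext_a(p), p', R)` with `p' ∈ P` and `Suc_a(p) ~^{S,R}_L p'`. -/
def GoodPhi {A : Type} (L : Set (TimedWord A)) (O : ObsTable A)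
    (Φ : Set (MorphTuple A)) : Prop :=
  (∀ p ∈ O.P, SucT p ∉ O.P → ∃ t ∈ Φ, t.src = extT p ∧ t.tgt ∈ O.P ∧
    t.ren.WF ∧ t.ren.n = (SucT p).word.length ∧ t.ren.n' = t.tgt.word.length ∧
    EquivSR L O.S t.ren (SucT p) t.tgt) ∧
  (∀ p ∈ O.P, ∀ a : A, SucA p a ∉ O.P → ∃ t ∈ Φ, t.src = extA p a ∧ t.tgt ∈ O.P ∧
    t.ren.WF ∧ t.ren.n = (SucA p a).word.length ∧ t.ren.n' = t.tgt.word.length ∧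
    EquivSR L O.S t.ren (SucA p a) t.tgt)

/-- `F = {p ∈ P | p ⊆ L}`: the accepting prefixes of a timed observation table. -/
def ObsTable.accepting {A : Type} (O : ObsTable A) (L : Set (TimedWord A)) :
    Set (ElemLang A) :=
  {p | p ∈ O.P ∧ p.toSet ⊆ L}

/-- The hypothesis recognizable timed language defined by `(⋃P, ⋃F, Φ)`. -/
def HypLang {A : Type} (L : Set (TimedWord A)) (O : ObsTable A)
    (Φ : Set (MorphTuple A)) : Set (TimedWord A) :=
  {w | ∃ w' ∈ unionOf (O.accepting L), MorphRel O.P Φ w w'}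

/-- The range of values of the sum `T_{i,n}` determined by a timed condition. -/
def rangeOf (c : TCond) (i : ℕ) : Set ℝ≥0 :=
  {x | ∃ v, c.Sat v ∧ sumT v i c.n = x}

/-- The range of values of `T_{i,n} + T''_{0,i''}` under a constraint over two blocks. -/
def pairRangeOf (φ : Set (List ℝ≥0 × List ℝ≥0)) (i n i'' : ℕ) : Set ℝ≥0 :=
  {x | ∃ vv ∈ φ, sumT vv.1 i n + sumT vv.2 0 i'' = x}

/-- The sum `T_{i,|u|} + T''_{0,i''}` is non-trivial in `Sym_L(p⋅p'')`: its range under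
`Sym_L(p⋅p'')` differs from its range under `Λ ∧ Λ''`. -/
def NonTrivial {A : Type} (L : Set (TimedWord A)) (p pDD : ElemLang A)
    (i iDD : ℕ) : Prop :=
  pairRangeOf (SymPair L p pDD) i p.word.length iDD ≠
  pairRangeOf {vv | p.cond.Sat vv.1 ∧ pDD.cond.Sat vv.2} i p.word.length iDD

open Set

theorem sumT_append_left (u w : List ℝ≥0) {i j : ℕ} (hj : j < u.length) :
    sumT (u ++ w) i j = sumT u i j := by
  unfold sumT
  rw [← List.drop_take, ← List.drop_take, List.take_append_of_le_length (by omega)]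

theorem sumT_eq_sum_drop {v : List ℝ≥0} {j : ℕ} (hv : v.length ≤ j + 1) (i : ℕ) :
    sumT v i j = (v.drop i).sum := by
  unfold sumT
  rw [List.take_of_length_le (by simp; omega)]

theorem sumT_append_zero {u : List ℝ≥0} {n : ℕ} (hu : u.length = n + 1) (i : ℕ) :
    sumT (u ++ [0]) i (n + 1) = sumT u i n := by
  rw [sumT_eq_sum_drop (by simp [hu]), sumT_eq_sum_drop hu.le, List.drop_append,
    List.sum_append, List.sum_eq_zero (l := List.drop _ [0])
      fun x hx => List.mem_singleton.1 (List.mem_of_mem_drop hx), add_zero]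

theorem sumT_of_lt (v : List ℝ≥0) {i j : ℕ} (h : j < i) : sumT v i j = 0 := by
  simp [sumT, Nat.sub_eq_zero_of_le h]

theorem sum_eq_sumT {v : List ℝ≥0} {n : ℕ} (hv : v.length = n + 1) : v.sum = sumT v 0 n := by
  rw [sumT_eq_sum_drop hv.le, List.drop_zero]

section UnitRegion

variable {x y : ℝ≥0} {d e : ℕ}

theorem natCast_lt_iff_of_mem_Ioo (hx : x ∈ Ioo (d : ℝ≥0) (d + 1)) : (e : ℝ≥0) < x ↔ e ≤ d := by
  refine ⟨fun h => ?_, fun h => lt_of_le_of_lt (Nat.cast_le.2 h) hx.1⟩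
  exact Nat.lt_succ_iff.1 (by exact_mod_cast h.trans hx.2)

theorem natCast_le_iff_of_mem_Ioo (hx : x ∈ Ioo (d : ℝ≥0) (d + 1)) : (e : ℝ≥0) ≤ x ↔ e ≤ d := by
  refine ⟨fun h => ?_, fun h => (natCast_lt_iff_of_mem_Ioo hx).2 h |>.le⟩
  exact Nat.lt_succ_iff.1 (by exact_mod_cast h.trans_lt hx.2)

theorem lt_natCast_iff_of_mem_Ioo (hx : x ∈ Ioo (d : ℝ≥0) (d + 1)) : x < e ↔ d < e := by
  refine ⟨fun h => by exact_mod_cast hx.1.trans h, fun h => hx.2.trans_le ?_⟩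
  exact_mod_cast Nat.succ_le_of_lt h

theorem le_natCast_iff_of_mem_Ioo (hx : x ∈ Ioo (d : ℝ≥0) (d + 1)) : x ≤ e ↔ d < e := by
  refine ⟨fun h => by exact_mod_cast hx.1.trans_le h, fun h => ?_⟩
  exact ((lt_natCast_iff_of_mem_Ioo hx).2 h).le

theorem Rel.holds_iff_of_mem_Ioo {r : Rel} (hx : x ∈ Ioo (d : ℝ≥0) (d + 1))
    (hy : y ∈ Ioo (d : ℝ≥0) (d + 1)) : r.holds x e ↔ r.holds y e := by
  cases r
  · exact (lt_natCast_iff_of_mem_Ioo hx).trans (lt_natCast_iff_of_mem_Ioo hy).symm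
  · exact (le_natCast_iff_of_mem_Ioo hx).trans (le_natCast_iff_of_mem_Ioo hy).symm
  · exact (natCast_le_iff_of_mem_Ioo hx).trans (natCast_le_iff_of_mem_Ioo hy).symm
  · exact (natCast_lt_iff_of_mem_Ioo hx).trans (natCast_lt_iff_of_mem_Ioo hy).symm

noncomputable def unitRegion (x : ℝ≥0) : Set ℝ≥0 :=
  if x = ⌊x⌋₊ then {x} else Ioo (⌊x⌋₊ : ℝ≥0) (⌊x⌋₊ + 1)

theorem mem_Ioo_floor_of_ne (h : x ≠ ⌊x⌋₊) : x ∈ Ioo (⌊x⌋₊ : ℝ≥0) (⌊x⌋₊ + 1) :=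
  ⟨(Nat.floor_le zero_le).lt_of_ne (Ne.symm h), Nat.lt_floor_add_one x⟩

theorem mem_unitRegion_self (x : ℝ≥0) : x ∈ unitRegion x := by
  unfold unitRegion
  split_ifs with h
  · rfl
  · exact mem_Ioo_floor_of_ne h

theorem mem_unitRegion_of_mem_Ioo (hx : x ∈ Ioo (d : ℝ≥0) (d + 1))
    (hy : y ∈ Ioo (d : ℝ≥0) (d + 1)) : y ∈ unitRegion x := by
  have hfloor : ⌊x⌋₊ = d := (Nat.floor_eq_iff zero_le).2 ⟨hx.1.le, hx.2⟩
  have hne : x ≠ ⌊x⌋₊ := hfloor ▸ hx.1.ne'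
  rwa [unitRegion, if_neg hne, hfloor]

theorem le_floor_add_one_of_mem_unitRegion (hy : y ∈ unitRegion x) : y ≤ ⌊x⌋₊ + 1 := by
  unfold unitRegion at hy
  split_ifs at hy with h
  · rw [Set.mem_singleton_iff.1 hy, h, Nat.floor_natCast]
    exact le_self_add
  · exact hy.2.le

theorem Rel.holds_of_mem_unitRegion {r : Rel} (h : r.holds x e) (hy : y ∈ unitRegion x) :
    r.holds y e := by
  unfold unitRegion at hy
  split_ifs at hy with hx
  · rwa [Set.mem_singleton_iff.1 hy]
  · exact (Rel.holds_iff_of_mem_Ioo (mem_Ioo_floor_of_ne hx) hy).1 h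

end UnitRegion

section RegionCond

noncomputable def regionAtoms (i j : ℕ) (x : ℝ≥0) : Finset TCAtom :=
  if x = ⌊x⌋₊ then {⟨i, j, .ge, ⌊x⌋₊⟩, ⟨i, j, .le, ⌊x⌋₊⟩}
  else {⟨i, j, .gt, ⌊x⌋₊⟩, ⟨i, j, .lt, ⌊x⌋₊ + 1⟩}

variable {i j : ℕ} {x : ℝ≥0}

theorem index_eq_of_mem_regionAtoms {b : TCAtom} (hb : b ∈ regionAtoms i j x) :
    b.i = i ∧ b.j = j := by
  unfold regionAtoms at hb
  split_ifs at hb <;> simp only [Finset.mem_insert, Finset.mem_singleton] at hb <;>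
    rcases hb with rfl | rfl <;> exact ⟨rfl, rfl⟩

theorem exists_pair_mem_regionAtoms (i j : ℕ) (x : ℝ≥0) : ∃ d : ℕ,
    ((⟨i, j, .gt, d⟩ : TCAtom) ∈ regionAtoms i j x ∧ ⟨i, j, .lt, d + 1⟩ ∈ regionAtoms i j x) ∨
    ((⟨i, j, .ge, d⟩ : TCAtom) ∈ regionAtoms i j x ∧ ⟨i, j, .le, d⟩ ∈ regionAtoms i j x) := by
  unfold regionAtoms
  split_ifs <;> exact ⟨⌊x⌋₊, by simp⟩

theorem forall_regionAtoms_holds_iff {y : ℝ≥0} :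
    (∀ b ∈ regionAtoms i j x, b.rel.holds y b.d) ↔ y ∈ unitRegion x := by
  unfold regionAtoms unitRegion
  split_ifs with h
  · simp only [Finset.mem_insert, Finset.mem_singleton, forall_eq_or_imp, forall_eq,
      Rel.holds, Set.mem_singleton_iff]
    rw [← h]
    exact ⟨fun h' => le_antisymm h'.2 h'.1, fun h' => ⟨h'.ge, h'.le⟩⟩
  · simp [Rel.holds]

theorem exists_regionAtoms_subsumes {r : Rel} {e : ℕ} (h : r.holds x e) :
    ∃ b ∈ regionAtoms i j x, ∀ y : ℝ≥0, b.rel.holds y b.d → r.holds y e := by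
  unfold regionAtoms
  split_ifs with hx
  · rw [hx] at h
    cases r
    · exact ⟨⟨i, j, .le, ⌊x⌋₊⟩, by simp, fun y hy => lt_of_le_of_lt hy h⟩
    · exact ⟨⟨i, j, .le, ⌊x⌋₊⟩, by simp, fun y hy => le_trans hy h⟩
    · exact ⟨⟨i, j, .ge, ⌊x⌋₊⟩, by simp, fun y hy => le_trans h hy⟩
    · exact ⟨⟨i, j, .ge, ⌊x⌋₊⟩, by simp, fun y hy => lt_of_lt_of_le h hy⟩
  · have hx' := mem_Ioo_floor_of_ne hx
    cases r
    · have he : ((⌊x⌋₊ + 1 : ℕ) : ℝ≥0) ≤ e :=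
        Nat.cast_le.2 ((lt_natCast_iff_of_mem_Ioo hx').1 h)
      exact ⟨⟨i, j, .lt, ⌊x⌋₊ + 1⟩, by simp, fun y hy => lt_of_lt_of_le hy he⟩
    · have he : ((⌊x⌋₊ + 1 : ℕ) : ℝ≥0) ≤ e :=
        Nat.cast_le.2 ((le_natCast_iff_of_mem_Ioo hx').1 h)
      exact ⟨⟨i, j, .lt, ⌊x⌋₊ + 1⟩, by simp, fun y hy => (lt_of_lt_of_le hy he).le⟩
    · have he : (e : ℝ≥0) ≤ ⌊x⌋₊ := Nat.cast_le.2 ((natCast_le_iff_of_mem_Ioo hx').1 h)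
      exact ⟨⟨i, j, .gt, ⌊x⌋₊⟩, by simp, fun y hy => (lt_of_le_of_lt he hy).le⟩
    · have he : (e : ℝ≥0) ≤ ⌊x⌋₊ := Nat.cast_le.2 ((natCast_lt_iff_of_mem_Ioo hx').1 h)
      exact ⟨⟨i, j, .gt, ⌊x⌋₊⟩, by simp, fun y hy => lt_of_le_of_lt he hy⟩

end RegionCond

section OfPairs

def TCond.ofPairs (n : ℕ) (f : ℕ → ℕ → Finset TCAtom) : TCond :=
  ⟨n, ((Finset.range (n + 1) ×ˢ Finset.range (n + 1)).filter fun q => q.1 ≤ q.2).biUnion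
    fun q => f q.1 q.2⟩

variable {n : ℕ} {f : ℕ → ℕ → Finset TCAtom}

theorem TCond.mem_ofPairs {b : TCAtom} :
    b ∈ (TCond.ofPairs n f).atoms ↔ ∃ i j, i ≤ j ∧ j ≤ n ∧ b ∈ f i j := by
  simp only [TCond.ofPairs, Finset.mem_biUnion, Finset.mem_filter, Finset.mem_product,
    Finset.mem_range, Prod.exists]
  constructor
  · rintro ⟨i, j, ⟨⟨-, hj⟩, hij⟩, hb⟩
    exact ⟨i, j, hij, by omega, hb⟩
  · rintro ⟨i, j, hij, hj, hb⟩
    exact ⟨i, j, ⟨⟨by omega, by omega⟩, hij⟩, hb⟩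

theorem TCond.ofPairs_wf (hf : ∀ i j, ∀ b ∈ f i j, b.i = i ∧ b.j = j) :
    (TCond.ofPairs n f).WF := by
  intro b hb
  obtain ⟨i, j, hij, hj, hb⟩ := TCond.mem_ofPairs.1 hb
  obtain ⟨rfl, rfl⟩ := hf i j b hb
  exact ⟨hij, hj⟩

theorem TCond.ofPairs_simple (hf : ∀ i j, ∃ x, regionAtoms i j x ⊆ f i j) :
    (TCond.ofPairs n f).Simple := by
  intro i j hij hj
  obtain ⟨x, hx⟩ := hf i j
  have hmem : ∀ b ∈ regionAtoms i j x, b ∈ (TCond.ofPairs n f).atoms :=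
    fun b hb => TCond.mem_ofPairs.2 ⟨i, j, hij, hj, hx hb⟩
  obtain ⟨d, ⟨h₁, h₂⟩ | ⟨h₁, h₂⟩⟩ := exists_pair_mem_regionAtoms i j x
  · exact ⟨d, Or.inl ⟨hmem _ h₁, hmem _ h₂⟩⟩
  · exact ⟨d, Or.inr ⟨hmem _ h₁, hmem _ h₂⟩⟩

end OfPairs

section Canonical

noncomputable def regionCond (n : ℕ) (v : List ℝ≥0) : TCond :=
  TCond.ofPairs n fun i j => regionAtoms i j (sumT v i j)

/-- Canonical because the unsatisfiable atom `T_{i,j} < 0` subsumes every atom on `T_{i,j}`. -/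
noncomputable def emptyCond (n : ℕ) : TCond :=
  TCond.ofPairs n fun i j => insert ⟨i, j, .lt, 0⟩ (regionAtoms i j 0)

variable {n : ℕ} {v : List ℝ≥0}

theorem regionCond_wf : (regionCond n v).WF :=
  TCond.ofPairs_wf fun _ _ _ => index_eq_of_mem_regionAtoms

theorem regionCond_simple : (regionCond n v).Simple :=
  TCond.ofPairs_simple fun _ _ => ⟨_, subset_rfl⟩

theorem sat_regionCond_iff {w : List ℝ≥0} : (regionCond n v).Sat w ↔
    w.length = n + 1 ∧ ∀ i j, i ≤ j → j ≤ n → sumT w i j ∈ unitRegion (sumT v i j) := by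
  refine and_congr_right fun _ => ⟨fun h i j hij hj => ?_, fun h b hb => ?_⟩
  · refine (forall_regionAtoms_holds_iff (i := i) (j := j)).1 fun b hb => ?_
    obtain ⟨rfl, rfl⟩ := index_eq_of_mem_regionAtoms hb
    exact h b (TCond.mem_ofPairs.2 ⟨_, _, hij, hj, hb⟩)
  · obtain ⟨i, j, hij, hj, hb⟩ := TCond.mem_ofPairs.1 hb
    obtain ⟨rfl, rfl⟩ := index_eq_of_mem_regionAtoms hb
    exact forall_regionAtoms_holds_iff.2 (h _ _ hij hj) b hb

theorem regionCond_canonical (hv : v.length = n + 1) : (regionCond n v).Canonical := by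
  intro a hij hj himp
  have hvsat : (regionCond n v).Sat v :=
    sat_regionCond_iff.2 ⟨hv, fun _ _ _ _ => mem_unitRegion_self _⟩
  obtain ⟨b, hb, hsub⟩ := exists_regionAtoms_subsumes (i := a.i) (j := a.j) (himp v hvsat)
  obtain ⟨hbi, hbj⟩ := index_eq_of_mem_regionAtoms hb
  exact ⟨b, TCond.mem_ofPairs.2 ⟨a.i, a.j, hij, hj, hb⟩, hbi, hbj, hsub⟩

theorem emptyCond_wf : (emptyCond n).WF := by
  refine TCond.ofPairs_wf fun i j b hb => ?_
  rcases Finset.mem_insert.1 hb with rfl | hb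
  · exact ⟨rfl, rfl⟩
  · exact index_eq_of_mem_regionAtoms hb

theorem emptyCond_simple : (emptyCond n).Simple :=
  TCond.ofPairs_simple fun _ _ => ⟨0, Finset.subset_insert _ _⟩

theorem emptyCond_canonical : (emptyCond n).Canonical := fun a hij hj _ =>
  ⟨⟨a.i, a.j, .lt, 0⟩, TCond.mem_ofPairs.2 ⟨a.i, a.j, hij, hj, Finset.mem_insert_self _ _⟩,
    rfl, rfl, fun y hy => absurd hy (by simp [Rel.holds])⟩

theorem emptyCond_not_sat (w : List ℝ≥0) : ¬ (emptyCond n).Sat w := fun hw =>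
  absurd (hw.2 ⟨0, 0, .lt, 0⟩ (TCond.mem_ofPairs.2
    ⟨0, 0, le_rfl, Nat.zero_le n, Finset.mem_insert_self _ _⟩)) (by simp [Rel.holds])

end Canonical

section HasRegions

def TCond.HasRegions (c : TCond) : Prop :=
  ∀ i j, i ≤ j → j ≤ c.n → ∀ v w, c.Sat v → c.Sat w → sumT w i j ∈ unitRegion (sumT v i j)

variable {c : TCond} {v : List ℝ≥0} {i j d : ℕ}

theorem TCond.Sat.sumT_eq (hv : c.Sat v) (hge : ⟨i, j, .ge, d⟩ ∈ c.atoms)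
    (hle : ⟨i, j, .le, d⟩ ∈ c.atoms) : sumT v i j = d :=
  le_antisymm (hv.2 _ hle) (hv.2 _ hge)

theorem TCond.Sat.sumT_mem_Ioo (hv : c.Sat v) (hgt : ⟨i, j, .gt, d⟩ ∈ c.atoms)
    (hlt : ⟨i, j, .lt, d + 1⟩ ∈ c.atoms) : sumT v i j ∈ Ioo (d : ℝ≥0) (d + 1) :=
  ⟨hv.2 _ hgt, by simpa [Rel.holds] using hv.2 _ hlt⟩

theorem TCond.Simple.hasRegions (hS : c.Simple) : c.HasRegions := by
  intro i j hij hj v w hv hw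
  obtain ⟨d, ⟨hgt, hlt⟩ | ⟨hge, hle⟩⟩ := hS i j hij hj
  · exact mem_unitRegion_of_mem_Ioo (hv.sumT_mem_Ioo hgt hlt) (hw.sumT_mem_Ioo hgt hlt)
  · rw [hw.sumT_eq hge hle, ← hv.sumT_eq hge hle]
    exact mem_unitRegion_self _

theorem TCond.HasRegions.bounded (hreg : c.HasRegions) : c.Bounded := by
  by_cases hsat : ∃ v, c.Sat v
  · obtain ⟨v₀, hv₀⟩ := hsat
    refine ⟨⌊sumT v₀ 0 c.n⌋₊ + 1, fun w hw => ?_⟩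
    rw [sum_eq_sumT hw.1]
    exact le_floor_add_one_of_mem_unitRegion (hreg 0 c.n (Nat.zero_le _) le_rfl v₀ w hv₀ hw)
  · exact ⟨0, fun w hw => absurd ⟨w, hw⟩ hsat⟩

theorem TCond.HasRegions.exists_simple_canonical (hwf : c.WF) (hreg : c.HasRegions) :
    ∃ c' : TCond, c'.n = c.n ∧ c'.WF ∧ c'.Simple ∧ c'.Canonical ∧
      ∀ v, c.Sat v ↔ c'.Sat v := by
  by_cases hsat : ∃ v, c.Sat v
  · obtain ⟨v₀, hv₀⟩ := hsat
    refine ⟨regionCond c.n v₀, rfl, regionCond_wf, regionCond_simple,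
      regionCond_canonical hv₀.1, fun w => ?_⟩
    rw [sat_regionCond_iff]
    refine ⟨fun hw => ⟨hw.1, fun i j hij hj => hreg i j hij hj v₀ w hv₀ hw⟩,
      fun ⟨hlen, hw⟩ => ⟨hlen, fun a ha => ?_⟩⟩
    exact Rel.holds_of_mem_unitRegion (hv₀.2 a ha) (hw a.i a.j (hwf a ha).1 (hwf a ha).2)
  · refine ⟨emptyCond c.n, rfl, emptyCond_wf, emptyCond_simple, emptyCond_canonical,
      fun w => iff_of_false (fun hw => hsat ⟨w, hw⟩) (emptyCond_not_sat w)⟩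

end HasRegions

section Successors

variable {c : TCond}

theorem TCond.WF.extendZero (hwf : c.WF) : c.extendZero.WF := by
  intro b hb
  simp only [TCond.extendZero, Finset.mem_union, Finset.mem_insert, Finset.mem_singleton] at hb
  rcases hb with hb | rfl | rfl
  · exact ⟨(hwf b hb).1, (hwf b hb).2.trans (Nat.le_succ _)⟩
  all_goals exact ⟨le_rfl, le_rfl⟩

theorem TCond.extendZero_sat_iff (hwf : c.WF) {v : List ℝ≥0} :
    c.extendZero.Sat v ↔ ∃ u, c.Sat u ∧ v = u ++ [0] := by
  have hatoms : ∀ u w : List ℝ≥0, u.length = c.n + 1 → ∀ a ∈ c.atoms,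
      (a.rel.holds (sumT (u ++ w) a.i a.j) a.d ↔ a.rel.holds (sumT u a.i a.j) a.d) := by
    intro u w hu a ha
    rw [sumT_append_left u w (by have := (hwf a ha).2; omega)]
  have hlast : ∀ (u : List ℝ≥0) x, u.length = c.n + 1 →
      sumT (u ++ [x]) (c.n + 1) (c.n + 1) = x := by
    intro u x hu
    simp [sumT, hu]
  simp only [TCond.Sat, TCond.extendZero, Finset.mem_union, Finset.mem_insert,
    Finset.mem_singleton]
  constructor
  · rintro ⟨hlen, hsat⟩
    obtain ⟨u, x, rfl⟩ : ∃ u x, v = u ++ [x] := by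
      rcases List.eq_nil_or_concat v with rfl | h
      · simp at hlen
      · simpa using h
    have hu : u.length = c.n + 1 := by simpa using hlen
    have hx : x = 0 := by
      simpa [Rel.holds, hlast u x hu] using hsat _ (Or.inr (Or.inl rfl))
    subst hx
    exact ⟨u, ⟨hu, fun a ha => (hatoms u [0] hu a ha).1 (hsat a (Or.inl ha))⟩, rfl⟩
  · rintro ⟨u, ⟨hu, hsat⟩, rfl⟩
    refine ⟨by simp [hu], ?_⟩
    rintro a (ha | rfl | rfl)
    · exact (hatoms u [0] hu a ha).2 (hsat a ha)
    all_goals simp [Rel.holds, hlast u 0 hu]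

theorem TCond.HasRegions.extendZero (hwf : c.WF) (hreg : c.HasRegions) :
    c.extendZero.HasRegions := by
  intro i j hij hj v w hv hw
  obtain ⟨u, hu, rfl⟩ := (c.extendZero_sat_iff hwf).1 hv
  obtain ⟨u', hu', rfl⟩ := (c.extendZero_sat_iff hwf).1 hw
  have hj : j ≤ c.n + 1 := hj
  have hlen := hu.1
  have hlen' := hu'.1
  rcases Nat.lt_or_ge j (c.n + 1) with hjn | hjn
  · rw [sumT_append_left _ _ (by omega), sumT_append_left _ _ (by omega)]
    exact hreg i j hij (by omega) u u' hu hu'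
  · obtain rfl : j = c.n + 1 := by omega
    rw [sumT_append_zero hlen, sumT_append_zero hlen']
    rcases Nat.lt_or_ge c.n i with hi | hi
    · rw [sumT_of_lt u hi, sumT_of_lt u' hi]
      exact mem_unitRegion_self 0
    · exact hreg i c.n hi le_rfl u u' hu hu'

theorem TCond.sucTCond_n (c : TCond) : c.sucTCond.n = c.n := by
  unfold TCond.sucTCond
  split_ifs <;> rfl

theorem TCond.WF.sdiff_union_image (hwf : c.WF) {t : Finset TCAtom} (ht : t ⊆ c.atoms)
    {g : TCAtom → TCAtom} (hg : ∀ a, (g a).i = a.i ∧ (g a).j = a.j) :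
    TCond.WF ⟨c.n, (c.atoms \ t) ∪ t.image g⟩ := by
  intro b hb
  rcases Finset.mem_union.1 hb with hb | hb
  · exact hwf b (Finset.mem_sdiff.1 hb).1
  · obtain ⟨a, ha, rfl⟩ := Finset.mem_image.1 hb
    rw [(hg a).1, (hg a).2]
    exact hwf a (ht ha)

theorem TCond.WF.sucTCond (hwf : c.WF) : c.sucTCond.WF := by
  classical
  unfold TCond.sucTCond
  split_ifs
  all_goals
    refine hwf.sdiff_union_image (Finset.filter_subset _ _) fun a => ?_
    split_ifs <;> exact ⟨rfl, rfl⟩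

theorem TCond.Simple.sucTCond (hS : c.Simple) : c.sucTCond.Simple := by
  classical
  intro i j hij hj
  rw [TCond.sucTCond_n] at hj
  have keep : ∀ {s t : Finset TCAtom} {g : TCAtom → TCAtom} {b : TCAtom},
      b ∈ s → b ∉ t → b ∈ (s \ t) ∪ t.image g :=
    fun hs ht => Finset.mem_union_left _ (Finset.mem_sdiff.2 ⟨hs, ht⟩)
  have move : ∀ {s t : Finset TCAtom} {g : TCAtom → TCAtom} {b : TCAtom},
      b ∈ t → g b ∈ (s \ t) ∪ t.image g :=
    fun ht => Finset.mem_union_right _ (Finset.mem_image_of_mem _ ht)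
  obtain ⟨d, ⟨hgt, hlt⟩ | ⟨hge, hle⟩⟩ := hS i j hij hj
  all_goals unfold TCond.sucTCond; split_ifs with hE
  · exact ⟨d, Or.inl ⟨keep hgt (by simp [TCond.suffixEqAtoms]),
      keep hlt (by simp [TCond.suffixEqAtoms])⟩⟩
  · by_cases hM : j = c.n ∧ c.MaxFracIdx i
    · obtain ⟨rfl, hmax⟩ := hM
      have hgtM : (⟨i, c.n, .gt, d⟩ : TCAtom) ∈ c.maxFracAtoms := by
        simp [TCond.maxFracAtoms, hgt, hmax]
      have hltM : (⟨i, c.n, .lt, d + 1⟩ : TCAtom) ∈ c.maxFracAtoms := by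
        simp [TCond.maxFracAtoms, hlt, hmax]
      exact ⟨d + 1, Or.inr ⟨move hgtM, move hltM⟩⟩
    · exact ⟨d, Or.inl ⟨keep hgt (by simp [TCond.maxFracAtoms, hM]),
        keep hlt (by simp [TCond.maxFracAtoms, hM])⟩⟩
  · by_cases hjn : j = c.n
    · subst hjn
      have hgeE : (⟨i, c.n, .ge, d⟩ : TCAtom) ∈ c.suffixEqAtoms := by
        simp [TCond.suffixEqAtoms, hge, hle]
      have hleE : (⟨i, c.n, .le, d⟩ : TCAtom) ∈ c.suffixEqAtoms := by
        simp [TCond.suffixEqAtoms, hge, hle]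
      exact ⟨d, Or.inl ⟨move hgeE, move hleE⟩⟩
    · exact ⟨d, Or.inr ⟨keep hge (by simp [TCond.suffixEqAtoms, hjn]),
        keep hle (by simp [TCond.suffixEqAtoms, hjn])⟩⟩
  · have hjn : j ≠ c.n := by
      rintro rfl
      exact hE ⟨⟨i, c.n, .ge, d⟩, by simp [TCond.suffixEqAtoms, hge, hle]⟩
    exact ⟨d, Or.inr ⟨keep hge (by simp [TCond.maxFracAtoms]),
      keep hle (by simp [TCond.maxFracAtoms])⟩⟩

end Successors

theorem statement18_general {A : Type} (p : ElemLang A) (hp : p.WF)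
    (hS : p.cond.Simple) (a : A) :
    ((SucA p a).WF ∧ (SucA p a).IsSimple) ∧ ((SucT p).WF ∧ (SucT p).IsSimple) := by
  obtain ⟨hn, hwf, -⟩ := hp
  have hA : p.cond.extendZero.HasRegions := hS.hasRegions.extendZero hwf
  have hT : p.cond.sucTCond.HasRegions := hS.sucTCond.hasRegions
  refine ⟨⟨⟨?_, hwf.extendZero, hA.bounded⟩, hA.exists_simple_canonical hwf.extendZero⟩,
    ⟨⟨?_, hwf.sucTCond, hT.bounded⟩, hT.exists_simple_canonical hwf.sucTCond⟩⟩
  · simp [SucA, TCond.extendZero, hn]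
  · simp [SucT, TCond.sucTCond_n, hn]

theorem statement18 {A : Type} [Finite A] (p : ElemLang A) (hp : p.WF)
    (hS : p.cond.Simple) (hC : p.cond.Canonical) (a : A) :
    ((SucA p a).WF ∧ (SucA p a).IsSimple) ∧ ((SucT p).WF ∧ (SucT p).IsSimple) :=
  statement18_general p hp hS a

end TimedLang
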